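/- arXiv:2305.07156 — 2 statements merged into one kernel-verified Lean document; each statement's English description precedes it below -/
import Mathlib

section
/- For every integer n ≥ 1 and every d ∈ [0,1], C_n(d) ≤ Σ_{k=1}^{n} C(n,k)·d^{n−k}·(1−d)^k·C_{n,k}, where C(n,k) denotes the binomial coefficient. -/
open Finset

/-- Mutual information of a joint distribution `q` on `α × β`, where the output
marginal is supported inside the finite set `Ys`. Terms with zero joint
probability vanish since they are multiplied by `q x y = 0`. -/
noncomputable def MI {α : Type*} [Fintype α] {β : Type*} [DecidableEq β]
    (q : α → β → ℝ) (Ys : Finset β) : ℝ :=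
  ∑ x : α, ∑ y ∈ Ys, q x y *
    Real.logb 2 (q x y / ((∑ y' ∈ Ys, q x y') * (∑ x' : α, q x' y)))

/-- `p` is a probability distribution on the finite type `α`. -/
def IsDist {α : Type*} [Fintype α] (p : α → ℝ) : Prop :=
  (∀ a, 0 ≤ p a) ∧ ∑ a : α, p a = 1

/-- The subsequence of `x` obtained by keeping exactly the positions in `S`. -/
def delOutput {n : ℕ} (x : Fin n → Bool) (S : Finset (Fin n)) : List Bool :=
  (S.sort (· ≤ ·)).map x

/-- All binary strings of length at most `n`. -/
def listsUpTo (n : ℕ) : Finset (List Bool) :=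
  (Finset.range (n + 1)).biUnion
    (fun k => Finset.image (fun v : Fin k → Bool => List.ofFn v) Finset.univ)

/-- Transition probability of the binary deletion channel `W_n^d`:
each bit is deleted independently with probability `d`. -/
noncomputable def Wdel (n : ℕ) (d : ℝ) (x : Fin n → Bool) (y : List Bool) : ℝ :=
  ∑ S : Finset (Fin n),
    if delOutput x S = y then (1 - d) ^ S.card * d ^ (n - S.card) else 0

/-- `C_n(d)`: the supremum of `I(X;Y)` over input distributions on `{0,1}^n`,
where `Y` is the output of the deletion channel `W_n^d` on input `X`. -/
noncomputable def Cdel (n : ℕ) (d : ℝ) : ℝ :=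
  sSup { r | ∃ p : (Fin n → Bool) → ℝ, IsDist p ∧
    r = MI (fun x y => p x * Wdel n d x y) (listsUpTo n) }

/-- Transition probability of the channel `W_{n,k}` which keeps a uniformly
random `k`-element subset of the `n` positions. -/
noncomputable def Wnk (n k : ℕ) (x : Fin n → Bool) (y : List Bool) : ℝ :=
  (∑ S ∈ Finset.powersetCard k (Finset.univ : Finset (Fin n)),
      if delOutput x S = y then (1 : ℝ) else 0) / (n.choose k : ℝ)

/-- `C_{n,k}`: the supremum of `I(X;Y)` over input distributions on `{0,1}^n`,
where `Y` is the output of `W_{n,k}` on input `X`. -/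
noncomputable def Cnk (n k : ℕ) : ℝ :=
  sSup { r | ∃ p : (Fin n → Bool) → ℝ, IsDist p ∧
    r = MI (fun x y => p x * Wnk n k x y) (listsUpTo n) }

open Real

/-!
Drawing the number `k` of surviving bits first (binomially) and then a uniform `k`-subset of
positions shows that `W_n^d` is the mixture `∑ₖ C(n,k) d^(n-k) (1-d)^k W_{n,k}`. For a fixed input
distribution, mutual information is convex in the channel (the log-sum inequality at each pair
`(x, y)`), so `I(X;Y) ≤ ∑ₖ C(n,k) d^(n-k) (1-d)^k I(X;Yₖ)`, and each `I(X;Yₖ)` is at most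
`C_{n,k}`. The term `k = 0` vanishes because `W_{n,0}` always outputs the empty string.
-/

section LogSum

variable {ι : Type*} {s : Finset ι} {a b : ι → ℝ}

lemma sub_le_mul_log_div {a b : ℝ} (ha : 0 ≤ a) (hb : 0 ≤ b) (hab : 0 < a → 0 < b) :
    a - b ≤ a * log (a / b) := by
  rcases ha.eq_or_lt with rfl | ha
  · simpa using hb
  have hb := hab ha
  have hlog := one_sub_inv_le_log_of_pos (div_pos ha hb)
  rw [inv_div] at hlog
  calc a - b = a * (1 - b / a) := by field_simp
    _ ≤ a * log (a / b) := mul_le_mul_of_nonneg_left hlog ha.le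

theorem sum_mul_log_div_sum_le (ha : ∀ i ∈ s, 0 ≤ a i) (hb : ∀ i ∈ s, 0 ≤ b i)
    (hab : ∀ i ∈ s, 0 < a i → 0 < b i) :
    (∑ i ∈ s, a i) * log ((∑ i ∈ s, a i) / ∑ i ∈ s, b i) ≤ ∑ i ∈ s, a i * log (a i / b i) := by
  rcases (sum_nonneg ha).eq_or_lt with hA | hA
  · have hzero : ∀ i ∈ s, a i = 0 := (sum_eq_zero_iff_of_nonneg ha).mp hA.symm
    rw [← hA, zero_mul, sum_eq_zero fun i hi => by rw [hzero i hi, zero_mul]]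
  obtain ⟨j, hj, haj⟩ :=
    exists_lt_of_sum_lt (by simpa using hA : ∑ i ∈ s, (0 : ℝ) < ∑ i ∈ s, a i)
  set A := ∑ i ∈ s, a i
  set B := ∑ i ∈ s, b i
  have hB : 0 < B := (hab j hj haj).trans_le (single_le_sum hb hj)
  -- Gibbs' inequality against `b` rescaled to the total mass of `a`.
  have key : ∑ i ∈ s, (a i - b i * (A / B)) ≤
      ∑ i ∈ s, (a i * log (a i / b i) - a i * log (A / B)) := by
    refine sum_le_sum fun i hi => ?_
    rcases (ha i hi).eq_or_lt with hai | hai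
    · simp [← hai, mul_nonneg (hb i hi) (div_nonneg hA.le hB.le)]
    have hbi := hab i hi hai
    calc a i - b i * (A / B) ≤ a i * log (a i / (b i * (A / B))) :=
          sub_le_mul_log_div (ha i hi) (by positivity) fun _ => by positivity
      _ = a i * log (a i / b i) - a i * log (A / B) := by
          rw [← div_div, log_div (by positivity) (by positivity), mul_sub]
  rw [sum_sub_distrib, sum_sub_distrib, ← sum_mul, ← sum_mul, mul_div_cancel₀ _ hB.ne',
    sub_self] at key
  linarith

end LogSum

section MutualInformation

variable {α β ι : Type*} [Fintype α]

lemma mul_log_div_le_sum_mul_log_div {Ys : Finset β} {K : Finset ι} {w : ι → ℝ}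
    {q : α → β → ℝ} {Q : ι → α → β → ℝ} (hw : ∀ k ∈ K, 0 ≤ w k)
    (hQ : ∀ k ∈ K, ∀ x y, 0 ≤ Q k x y) (hq : ∀ x y, q x y = ∑ k ∈ K, w k * Q k x y)
    (hrow : ∀ k ∈ K, ∀ x, ∑ y ∈ Ys, Q k x y = ∑ y ∈ Ys, q x y) (x : α) {y : β} (hy : y ∈ Ys) :
    q x y * log (q x y / ((∑ y' ∈ Ys, q x y') * ∑ x', q x' y)) ≤
      ∑ k ∈ K, w k * (Q k x y * log (Q k x y / ((∑ y' ∈ Ys, Q k x y') * ∑ x', Q k x' y))) := by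
  have hpos : ∀ k ∈ K, 0 < w k * Q k x y →
      0 < w k * ((∑ y' ∈ Ys, Q k x y') * ∑ x', Q k x' y) := by
    intro k hk h
    have hQpos : 0 < Q k x y := pos_of_mul_pos_right h (hw k hk)
    have hle_row := single_le_sum (fun y' _ => hQ k hk x y') hy
    have hle_col := single_le_sum (fun x' _ => hQ k hk x' y) (mem_univ x)
    exact mul_pos (pos_of_mul_pos_left h hQpos.le) (mul_pos (by linarith) (by linarith))
  have hsum_b : ∑ k ∈ K, w k * ((∑ y' ∈ Ys, Q k x y') * ∑ x', Q k x' y) =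
      (∑ y' ∈ Ys, q x y') * ∑ x', q x' y := by
    have hcol : ∑ x', q x' y = ∑ k ∈ K, w k * ∑ x', Q k x' y := by
      simp only [hq, mul_sum]
      exact sum_comm
    rw [hcol, mul_sum]
    refine sum_congr rfl fun k hk => ?_
    rw [hrow k hk x]
    ring
  have hlogsum := sum_mul_log_div_sum_le (fun k hk => mul_nonneg (hw k hk) (hQ k hk x y))
    (fun k hk => mul_nonneg (hw k hk) (mul_nonneg (sum_nonneg fun y' _ => hQ k hk x y')
      (sum_nonneg fun x' _ => hQ k hk x' y))) hpos
  rw [← hq, hsum_b] at hlogsum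
  refine hlogsum.trans_eq (sum_congr rfl fun k hk => ?_)
  rcases (hw k hk).eq_or_lt with h | h
  · simp [← h]
  · rw [mul_div_mul_left _ _ h.ne']
    ring

variable [DecidableEq β]

lemma MI_eq_sum_mul_log_div (q : α → β → ℝ) (Ys : Finset β) :
    MI q Ys = (∑ x, ∑ y ∈ Ys, q x y *
      log (q x y / ((∑ y' ∈ Ys, q x y') * ∑ x', q x' y))) / log 2 := by
  simp only [MI, logb, mul_div_assoc', sum_div]

lemma MI_le_card_div_log_two (q : α → β → ℝ) (Ys : Finset β) (hq : ∀ x y, 0 ≤ q x y) :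
    MI q Ys ≤ Fintype.card α / log 2 := by
  have hrow : ∀ x, ∑ y ∈ Ys, q x y * logb 2 (q x y / ((∑ y' ∈ Ys, q x y') * ∑ x', q x' y))
      ≤ 1 / log 2 := by
    intro x
    have hr : 0 ≤ ∑ y' ∈ Ys, q x y' := sum_nonneg fun y _ => hq x y
    calc _ ≤ ∑ y ∈ Ys, q x y * -logb 2 (∑ y' ∈ Ys, q x y') := sum_le_sum fun y hy => ?_
      _ = negMulLog (∑ y' ∈ Ys, q x y') / log 2 := by rw [← sum_mul, negMulLog, logb]; ring
      _ ≤ 1 / log 2 := by gcongr; linarith [negMulLog_le_one_sub_self hr]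
    rcases (hq x y).eq_or_lt with hxy | hxy
    · simp [← hxy]
    have hle_row : q x y ≤ ∑ y' ∈ Ys, q x y' := single_le_sum (fun y _ => hq x y) hy
    have hle_col : q x y ≤ ∑ x', q x' y := single_le_sum (fun x' _ => hq x' y) (mem_univ x)
    have hpos : 0 < (∑ y' ∈ Ys, q x y') * ∑ x', q x' y := mul_pos (by linarith) (by linarith)
    gcongr
    rw [← logb_inv]
    refine logb_le_logb_of_le one_lt_two (div_pos hxy hpos) ?_
    rw [div_le_iff₀ hpos, inv_mul_eq_div, le_div_iff₀ (by linarith)]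
    nlinarith
  calc MI q Ys ≤ ∑ _x : α, 1 / log 2 := sum_le_sum fun x _ => hrow x
    _ = Fintype.card α / log 2 := by rw [sum_const, card_univ, nsmul_eq_mul, mul_one_div]

lemma isDist_ite_eq [DecidableEq α] (a : α) : IsDist fun x => if x = a then (1 : ℝ) else 0 :=
  ⟨fun _ => by positivity, by rw [sum_ite_eq', if_pos (mem_univ a)]⟩

lemma bddAbove_MI_mul {W : α → β → ℝ} (hW : ∀ x y, 0 ≤ W x y) (Ys : Finset β) :
    BddAbove {r | ∃ p : α → ℝ, IsDist p ∧ r = MI (fun x y => p x * W x y) Ys} :=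
  ⟨Fintype.card α / log 2, by
    rintro _ ⟨p, hp, rfl⟩
    exact MI_le_card_div_log_two _ _ fun x y => mul_nonneg (hp.1 x) (hW x y)⟩

lemma MI_mul_eq_zero (a : α → ℝ) (b : β → ℝ) (Ys : Finset β) (ha : ∑ x, a x = 1)
    (hb : ∑ y ∈ Ys, b y = 1) : MI (fun x y => a x * b y) Ys = 0 := by
  simp only [MI]
  refine sum_eq_zero fun x _ => sum_eq_zero fun y _ => ?_
  rw [← mul_sum, hb, ← sum_mul, ha, mul_one, one_mul]
  rcases eq_or_ne (a x * b y) 0 with h | h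
  · rw [h, zero_mul]
  · rw [div_self h, logb_one, mul_zero]

theorem MI_le_sum_mul_MI (Ys : Finset β) {K : Finset ι} {w : ι → ℝ} {q : α → β → ℝ}
    {Q : ι → α → β → ℝ} (hw : ∀ k ∈ K, 0 ≤ w k) (hQ : ∀ k ∈ K, ∀ x y, 0 ≤ Q k x y)
    (hq : ∀ x y, q x y = ∑ k ∈ K, w k * Q k x y)
    (hrow : ∀ k ∈ K, ∀ x, ∑ y ∈ Ys, Q k x y = ∑ y ∈ Ys, q x y) :
    MI q Ys ≤ ∑ k ∈ K, w k * MI (Q k) Ys := by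
  calc MI q Ys
      ≤ (∑ x, ∑ y ∈ Ys, ∑ k ∈ K, w k *
          (Q k x y * log (Q k x y / ((∑ y' ∈ Ys, Q k x y') * ∑ x', Q k x' y)))) / log 2 := by
        rw [MI_eq_sum_mul_log_div]
        gcongr with x _ y hy
        exact mul_log_div_le_sum_mul_log_div hw hQ hq hrow x hy
    _ = ∑ k ∈ K, w k * MI (Q k) Ys := by
        simp only [MI_eq_sum_mul_log_div, mul_div_assoc', ← sum_div, mul_sum]
        congr 1
        conv_rhs => rw [sum_comm]
        exact sum_congr rfl fun x _ => sum_comm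

end MutualInformation

section DeletionChannel

variable {n : ℕ}

lemma delOutput_mem_listsUpTo (x : Fin n → Bool) (S : Finset (Fin n)) :
    delOutput x S ∈ listsUpTo n := by
  have hlen : (delOutput x S).length ≤ n := by simpa [delOutput] using S.card_le_univ
  simp only [listsUpTo, mem_biUnion, mem_range, mem_image, mem_univ, true_and]
  exact ⟨_, Nat.lt_succ_of_le hlen, _, List.ofFn_get _⟩

lemma Wnk_nonneg (k : ℕ) (x : Fin n → Bool) (y : List Bool) : 0 ≤ Wnk n k x y :=
  div_nonneg (sum_nonneg fun _ _ => by positivity) (Nat.cast_nonneg _)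

lemma sum_Wnk {k : ℕ} (hk : k ≤ n) (x : Fin n → Bool) : ∑ y ∈ listsUpTo n, Wnk n k x y = 1 := by
  simp only [Wnk, ← sum_div]
  rw [sum_comm]
  simp only [sum_ite_eq, delOutput_mem_listsUpTo, if_true, sum_const, card_powersetCard,
    card_univ, Fintype.card_fin, nsmul_eq_mul, mul_one]
  exact div_self (by exact_mod_cast (Nat.choose_pos hk).ne')

lemma sum_Wdel (d : ℝ) (x : Fin n → Bool) : ∑ y ∈ listsUpTo n, Wdel n d x y = 1 := by
  simp only [Wdel]
  rw [sum_comm]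
  simp only [sum_ite_eq, delOutput_mem_listsUpTo, if_true]
  have := sum_pow_mul_eq_add_pow (1 - d) d (univ : Finset (Fin n))
  simpa only [card_univ, Fintype.card_fin, powerset_univ, sub_add_cancel, one_pow] using this

lemma Wdel_eq_sum_Wnk (d : ℝ) (x : Fin n → Bool) (y : List Bool) :
    Wdel n d x y =
      ∑ k ∈ range (n + 1), (n.choose k : ℝ) * d ^ (n - k) * (1 - d) ^ k * Wnk n k x y := by
  rw [Wdel, ← powerset_univ, sum_powerset]
  simp only [card_univ, Fintype.card_fin]
  refine sum_congr rfl fun k hk => ?_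
  have hchoose : (n.choose k : ℝ) ≠ 0 := by
    exact_mod_cast (Nat.choose_pos (mem_range_succ_iff.1 hk)).ne'
  rw [Wnk, mul_div_assoc', eq_div_iff hchoose, sum_mul, mul_sum]
  refine sum_congr rfl fun S hS => ?_
  rw [(mem_powersetCard.1 hS).2]
  split_ifs <;> ring

lemma Wnk_zero_apply (x x' : Fin n → Bool) (y : List Bool) : Wnk n 0 x y = Wnk n 0 x' y := by
  simp [Wnk, delOutput]

lemma MI_mul_Wnk_zero {p : (Fin n → Bool) → ℝ} (hp : IsDist p) :
    MI (fun x y => p x * Wnk n 0 x y) (listsUpTo n) = 0 := by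
  simp_rw [Wnk_zero_apply _ (fun _ => false)]
  exact MI_mul_eq_zero _ _ _ hp.2 (sum_Wnk (Nat.zero_le n) _)

end DeletionChannel

theorem Cn_le_sum_Cnk_general (n : ℕ) (d : ℝ) (hd₀ : 0 ≤ d) (hd₁ : d ≤ 1) :
    Cdel n d ≤ ∑ k ∈ Finset.Icc 1 n,
      (n.choose k : ℝ) * d ^ (n - k) * (1 - d) ^ k * Cnk n k := by
  have hw : ∀ k, 0 ≤ (n.choose k : ℝ) * d ^ (n - k) * (1 - d) ^ k := fun k => by
    have : 0 ≤ 1 - d := sub_nonneg.2 hd₁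
    positivity
  refine csSup_le ⟨_, _, isDist_ite_eq (fun _ => false), rfl⟩ ?_
  rintro _ ⟨p, hp, rfl⟩
  have hrow : ∀ k ∈ range (n + 1), ∀ x, ∑ y ∈ listsUpTo n, p x * Wnk n k x y =
      ∑ y ∈ listsUpTo n, p x * Wdel n d x y := fun k hk x => by
    rw [← mul_sum, ← mul_sum, sum_Wnk (mem_range_succ_iff.1 hk), sum_Wdel]
  calc MI (fun x y => p x * Wdel n d x y) (listsUpTo n)
      ≤ ∑ k ∈ range (n + 1), (n.choose k : ℝ) * d ^ (n - k) * (1 - d) ^ k *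
          MI (fun x y => p x * Wnk n k x y) (listsUpTo n) :=
        MI_le_sum_mul_MI _ (fun k _ => hw k)
          (fun k _ x y => mul_nonneg (hp.1 x) (Wnk_nonneg k x y))
          (fun x y => by rw [Wdel_eq_sum_Wnk, mul_sum]; exact sum_congr rfl fun k _ => by ring)
          hrow
    _ = ∑ k ∈ Icc 1 n, (n.choose k : ℝ) * d ^ (n - k) * (1 - d) ^ k *
          MI (fun x y => p x * Wnk n k x y) (listsUpTo n) := by
        rw [range_eq_Ico, sum_eq_sum_Ico_succ_bot n.succ_pos, MI_mul_Wnk_zero hp, mul_zero,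
          zero_add, ← Ico_add_one_right_eq_Icc]
        rfl
    _ ≤ _ := sum_le_sum fun k _ => mul_le_mul_of_nonneg_left
          (le_csSup (bddAbove_MI_mul (Wnk_nonneg k) _) ⟨p, hp, rfl⟩) (hw k)

/-- For every `n ≥ 1` and `d ∈ [0,1]`,
`C_n(d) ≤ Σ_{k=1}^n (n choose k) · d^(n−k) · (1−d)^k · C_{n,k}`. -/
theorem Cn_le_sum_Cnk (n : ℕ) (hn : 1 ≤ n) (d : ℝ) (hd₀ : 0 ≤ d) (hd₁ : d ≤ 1) :
    Cdel n d ≤ ∑ k ∈ Finset.Icc 1 n,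
      (n.choose k : ℝ) * d ^ (n - k) * (1 - d) ^ k * Cnk n k :=
  Cn_le_sum_Cnk_general n d hd₀ hd₁
end

section
/- Let x₁, x₂, y be finite strings (lists) over an alphabet with decidable equality, and let |y| = k. Then the number of occurrences of y as a subsequence of the concatenation x₁ ++ x₂ equals Σ_{j=0}^{k} N(take j of y, x₁)·N(drop j of y, x₂), where N(u, x) denotes the number of occurrences of u as a subsequence of x, i.e., the number of sets of positions in x that spell out u in order (equivalently, the multiplicity of u in the list of all sublists of x, counting one sublist per index set). -/
/-!
An index set in `x₁ ++ x₂` is a pair of index sets in `x₁` and in `x₂`, so the sublists of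
`x₁ ++ x₂` are the concatenations `s ++ t` of a sublist `s` of `x₁` and a sublist `t` of `x₂`
(`List.sublists_append`). Such a concatenation equals `y` for exactly one cut `j ≤ |y|`,
namely `s = y.take j` and `t = y.drop j`; summing over the cuts gives the formula.
-/

namespace List

variable {α : Type*} [DecidableEq α]

theorem sum_range_ite_take_drop_eq (y s t : List α) :
    ∑ j ∈ Finset.range (y.length + 1), (if y.take j = s ∧ y.drop j = t then 1 else 0) =
      if s ++ t = y then 1 else 0 := by
  split_ifs with hy
  · subst hy
    rw [Finset.sum_eq_single_of_mem s.length (by simp)]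
    · simp
    · intro j hj hne
      rw [if_neg]
      rintro ⟨hs, -⟩
      have hlen := congrArg length hs
      simp only [length_append, Finset.mem_range, Order.lt_add_one_iff, length_take] at hj hlen
      omega
  · refine Finset.sum_eq_zero fun j _ => if_neg ?_
    rintro ⟨rfl, rfl⟩
    exact hy (take_append_drop j y)

theorem count_map_append_right (L : List (List α)) (y t : List α) :
    count y (L.map (· ++ t)) =
      ∑ j ∈ Finset.range (y.length + 1),
        count (y.take j) L * if y.drop j = t then 1 else 0 := by
  induction L with
  | nil => simp
  | cons s L ih =>
    simp only [map_cons, count_cons, ih, add_mul, Finset.sum_add_distrib, beq_iff_eq,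
      ite_zero_mul_ite_zero, mul_one, eq_comm (a := s), sum_range_ite_take_drop_eq]

theorem count_flatMap_map_append (L₁ L₂ : List (List α)) (y : List α) :
    count y (L₂.flatMap fun t => L₁.map (· ++ t)) =
      ∑ j ∈ Finset.range (y.length + 1), count (y.take j) L₁ * count (y.drop j) L₂ := by
  induction L₂ with
  | nil => simp
  | cons t L₂ ih =>
    simp only [flatMap_cons, count_append, ih, count_map_append_right, count_cons, beq_iff_eq,
      mul_add, Finset.sum_add_distrib, eq_comm (a := t)]
    ring

end List

/-- For lists `x₁ x₂ y` over a type with decidable equality, with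
`|y| = k`, the number of occurrences of `y` as a subsequence of `x₁ ++ x₂`
(one occurrence per index set, i.e. `List.count y (x₁ ++ x₂).sublists`) equals
`Σ_{j=0}^{k} N(y.take j, x₁) · N(y.drop j, x₂)`. -/
theorem count_subseq_append {α : Type*} [DecidableEq α] (x₁ x₂ y : List α)
    (k : ℕ) (hk : y.length = k) :
    List.count y (x₁ ++ x₂).sublists =
      ∑ j ∈ Finset.range (k + 1),
        List.count (y.take j) x₁.sublists * List.count (y.drop j) x₂.sublists := by
  subst hk
  rw [List.sublists_append]
  exact List.count_flatMap_map_append _ _ y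
end
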